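/- A stratified normal propositional program, where no predicate occurring in a negative body belongs to the same or a higher stratum than the head, has at most one answer set. Specifically: if P is a finite normal propositional program and there is a mapping strat : Atoms → ℕ such that for every rule r, strat(head(r)) ≥ strat(a) for all a ∈ body⁺(r) and strat(head(r)) > strat(b) for all b ∈ body⁻(r), then P has at most one answer set. -/

import Mathlib

structure Rule (α : Type) where
  head : α
  pos : Set α
  neg : Set α

variable {α : Type}

def TP (P : Set (Rule α)) (X : Set α) : Set α :=
  {a | ∃ r ∈ P, r.head = a ∧ r.pos ⊆ X}

def Cn (P : Set (Rule α)) : Set α :=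
  ⋂₀ {X | TP P X ⊆ X}

def reduct (P : Set (Rule α)) (X : Set α) : Set (Rule α) :=
  {r' | ∃ r ∈ P, r.neg ∩ X = ∅ ∧ r' = ⟨r.head, r.pos, ∅⟩}

def AnswerSet (P : Set (Rule α)) (X : Set α) : Prop :=
  X = Cn (reduct P X)

def GR (P : Set (Rule α)) (X : Set α) : Set (Rule α) :=
  {r ∈ P | r.pos ⊆ X ∧ r.neg ∩ X = ∅}

def heads (R : Set (Rule α)) : Set α := Rule.head '' R

def negs (R : Set (Rule α)) : Set α := ⋃ r ∈ R, r.neg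

def prefixSet (l : List (Rule α)) (i : ℕ) : Set (Rule α) :=
  {r | ∃ j < i, l[j]? = some r}

def Grounded (R : Set (Rule α)) : Prop :=
  ∃ l : List (Rule α), l.Nodup ∧ (∀ r, r ∈ R ↔ r ∈ l) ∧
    ∀ i (hi : i < l.length), (l.get ⟨i, hi⟩).pos ⊆ heads (prefixSet l i)

/-!
Induction on the stratum `n`: two answer sets `X`, `Y` agreeing on the atoms of stratum `< n`
have the same reduct on the rules with head of stratum `≤ n`, since the negative bodies of those
rules lie below `n`. As positive bodies never climb strata, the least model restricted to the
atoms of stratum `≤ n` is computed from these rules alone, so `X` and `Y` agree there as well.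
-/

lemma mem_Cn_iff {Q : Set (Rule α)} {a : α} : a ∈ Cn Q ↔ ∀ Z, TP Q Z ⊆ Z → a ∈ Z := by
  simp [Cn]

lemma Cn_subset_of_TP_subset {Q : Set (Rule α)} {Z : Set α} (h : TP Q Z ⊆ Z) : Cn Q ⊆ Z :=
  fun _ ha => mem_Cn_iff.mp ha Z h

lemma TP_Cn_subset (Q : Set (Rule α)) : TP Q (Cn Q) ⊆ Cn Q := by
  rintro a ⟨r, hr, rfl, hpos⟩
  exact mem_Cn_iff.mpr fun Z hZ =>
    hZ ⟨r, hr, rfl, fun x hx => mem_Cn_iff.mp (hpos hx) Z hZ⟩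

lemma Cn_mono {Q Q' : Set (Rule α)} (h : Q ⊆ Q') : Cn Q ⊆ Cn Q' :=
  Cn_subset_of_TP_subset fun _ ⟨r, hr, hhead, hpos⟩ => TP_Cn_subset Q' ⟨r, h hr, hhead, hpos⟩

lemma Cn_inter_eq_Cn_sep (Q : Set (Rule α)) (L : Set α)
    (hQ : ∀ r ∈ Q, r.head ∈ L → r.pos ⊆ L) :
    Cn Q ∩ L = Cn {r ∈ Q | r.head ∈ L} := by
  set QL := {r ∈ Q | r.head ∈ L}
  apply Set.Subset.antisymm
  · have hsub : Cn Q ⊆ Cn QL ∪ Lᶜ := by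
      refine Cn_subset_of_TP_subset ?_
      rintro b ⟨r, hr, rfl, hpos⟩
      by_cases hb : r.head ∈ L
      · refine Or.inl (TP_Cn_subset QL ⟨r, ⟨hr, hb⟩, rfl, fun x hx => ?_⟩)
        exact (hpos hx).resolve_right (not_not.mpr (hQ r hr hb hx))
      · exact Or.inr hb
    exact fun a ⟨haQ, haL⟩ => (hsub haQ).resolve_right (not_not.mpr haL)
  · have hL : Cn QL ⊆ L := Cn_subset_of_TP_subset (by rintro _ ⟨r, ⟨_, hrL⟩, rfl, _⟩; exact hrL)
    exact fun a ha => ⟨Cn_mono (fun r hr => hr.1) ha, hL ha⟩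

lemma sep_reduct_eq_reduct_sep (P : Set (Rule α)) (X L : Set α) :
    {r ∈ reduct P X | r.head ∈ L} = reduct {r ∈ P | r.head ∈ L} X := by
  ext r'
  constructor
  · rintro ⟨⟨r, hr, hneg, rfl⟩, hL⟩
    exact ⟨r, ⟨hr, hL⟩, hneg, rfl⟩
  · rintro ⟨r, ⟨hr, hL⟩, hneg, rfl⟩
    exact ⟨⟨r, hr, hneg, rfl⟩, hL⟩

lemma reduct_congr {P : Set (Rule α)} {X Y M : Set α} (hP : ∀ r ∈ P, r.neg ⊆ M)
    (hXY : X ∩ M = Y ∩ M) : reduct P X = reduct P Y := by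
  have hneg : ∀ r ∈ P, r.neg ∩ X = r.neg ∩ Y := fun r hr => by
    rw [← Set.inter_eq_left.mpr (hP r hr), Set.inter_assoc, Set.inter_assoc, Set.inter_comm M,
      Set.inter_comm M, hXY]
  ext r'
  constructor
  · rintro ⟨r, hr, h, rfl⟩
    exact ⟨r, hr, hneg r hr ▸ h, rfl⟩
  · rintro ⟨r, hr, h, rfl⟩
    exact ⟨r, hr, (hneg r hr).symm ▸ h, rfl⟩

lemma AnswerSet.inter_eq_of_inter_eq {P : Set (Rule α)} {X Y L M : Set α}
    (hX : AnswerSet P X) (hY : AnswerSet P Y)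
    (hpos : ∀ r ∈ P, r.head ∈ L → r.pos ⊆ L) (hneg : ∀ r ∈ P, r.head ∈ L → r.neg ⊆ M)
    (hXY : X ∩ M = Y ∩ M) : X ∩ L = Y ∩ L := by
  have hred : ∀ W, ∀ r ∈ reduct P W, r.head ∈ L → r.pos ⊆ L := by
    rintro W _ ⟨r, hr, -, rfl⟩
    exact hpos r hr
  calc X ∩ L = Cn (reduct P X) ∩ L := by rw [← hX]
    _ = Cn (reduct {r ∈ P | r.head ∈ L} X) := by
      rw [Cn_inter_eq_Cn_sep _ _ (hred X), sep_reduct_eq_reduct_sep]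
    _ = Cn (reduct {r ∈ P | r.head ∈ L} Y) := by
      rw [reduct_congr (fun r hr => hneg r hr.1 hr.2) hXY]
    _ = Cn (reduct P Y) ∩ L := by
      rw [Cn_inter_eq_Cn_sep _ _ (hred Y), sep_reduct_eq_reduct_sep]
    _ = Y ∩ L := by rw [← hY]

theorem stratified_unique_answer_set_general (α : Type) (P : Set (Rule α))
    (strat : α → ℕ)
    (hstrat : ∀ r ∈ P, (∀ a ∈ r.pos, strat a ≤ strat r.head) ∧
                        (∀ b ∈ r.neg, strat b < strat r.head)) :
    ∀ X Y : Set α, AnswerSet P X → AnswerSet P Y → X = Y := by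
  intro X Y hX hY
  have hlayer : ∀ n, X ∩ {a | strat a < n} = Y ∩ {a | strat a < n} := by
    intro n
    induction n with
    | zero => simp
    | succ n ih =>
      refine hX.inter_eq_of_inter_eq hY (fun r hr hhead a ha => ?_) (fun r hr hhead b hb => ?_) ih
      · exact ((hstrat r hr).1 a ha).trans_lt hhead
      · exact ((hstrat r hr).2 b hb).trans_le (Nat.le_of_lt_succ hhead)
  ext a
  simpa using congrArg (a ∈ ·) (hlayer (strat a + 1))

theorem stratified_unique_answer_set (α : Type) (P : Set (Rule α)) (hP : P.Finite)
    (strat : α → ℕ)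
    (hstrat : ∀ r ∈ P, (∀ a ∈ r.pos, strat a ≤ strat r.head) ∧
                        (∀ b ∈ r.neg, strat b < strat r.head)) :
    ∀ X Y : Set α, AnswerSet P X → AnswerSet P Y → X = Y :=
  stratified_unique_answer_set_general α P strat hstrat
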